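/- Let c ∈ ℂ, let A and B be nonempty types, and let u : A → ℂ^M and s : B → ℂ^N be arbitrary functions. Define J(θ,ψ) := sup over unit-modulus vectors v ∈ ℂ^N of ‖ c · (Σ_{n=1}^N s(ψ)_n v_n) • u(θ) ‖². Then (i) J(θ,ψ) = |c|² · ‖u(θ)‖² · (Σ_{n=1}^N |s(ψ)_n|)² for all θ ∈ A and ψ ∈ B, and (ii) for all θ, θ₀ ∈ A and ψ, ψ₀ ∈ B, J(θ,ψ) · J(θ₀,ψ₀) = J(θ,ψ₀) · J(θ₀,ψ). -/

import Mathlib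

open scoped BigOperators

/-- The optimized far-field reflected-channel power: the supremum of
`‖(c * ∑ n, s ψ n * v n) • u θ‖²` over unit-modulus vectors `v ∈ ℂ^N`. -/
noncomputable def Jff {M N : ℕ} {A B : Type*} (c : ℂ)
    (u : A → EuclideanSpace ℂ (Fin M)) (s : B → Fin N → ℂ) (θ : A) (ψ : B) : ℝ :=
  sSup {x : ℝ | ∃ v : Fin N → ℂ, (∀ n, ‖v n‖ = 1) ∧
    x = ‖(c * ∑ n, s ψ n * v n) • u θ‖ ^ 2}

/-! The triangle inequality bounds `|∑ sₙ vₙ|` by `∑ |sₙ|` for unit-modulus `v`, and the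
phase-aligning choice `vₙ = exp (-i arg sₙ)` attains the bound, so the supremum defining `Jff`
is a maximum equal to `|c|² ‖u θ‖² (∑ |sₙ|)²`; separability is then the commutativity of the
product of the `θ`- and `ψ`-factors. -/

section UnitModulus

variable {ι : Type*} [Fintype ι]

theorem norm_sum_mul_le_sum_norm_of_norm_eq_one (s v : ι → ℂ) (hv : ∀ n, ‖v n‖ = 1) :
    ‖∑ n, s n * v n‖ ≤ ∑ n, ‖s n‖ :=
  (norm_sum_le _ _).trans_eq <| Finset.sum_congr rfl fun n _ => by rw [norm_mul, hv n, mul_one]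

theorem sum_mul_exp_neg_arg_mul_I (s : ι → ℂ) :
    ∑ n, s n * Complex.exp (-(s n).arg * Complex.I) = ((∑ n, ‖s n‖ : ℝ) : ℂ) := by
  push_cast
  refine Finset.sum_congr rfl fun n _ => ?_
  conv_lhs => arg 1; rw [← Complex.norm_mul_exp_arg_mul_I (s n)]
  rw [mul_assoc, ← Complex.exp_add, neg_mul, add_neg_cancel, Complex.exp_zero, mul_one]

theorem isGreatest_norm_sq_smul_sum_mul {E : Type*} [SeminormedAddCommGroup E]
    [NormedSpace ℂ E] (c : ℂ) (w : E) (s : ι → ℂ) :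
    IsGreatest {x : ℝ | ∃ v : ι → ℂ, (∀ n, ‖v n‖ = 1) ∧ x = ‖(c * ∑ n, s n * v n) • w‖ ^ 2}
      (‖c‖ ^ 2 * ‖w‖ ^ 2 * (∑ n, ‖s n‖) ^ 2) := by
  have norm_sq_eq (z : ℂ) : ‖(c * z) • w‖ ^ 2 = ‖c‖ ^ 2 * ‖w‖ ^ 2 * ‖z‖ ^ 2 := by
    rw [norm_smul, norm_mul]; ring
  constructor
  · refine ⟨fun n => Complex.exp (-(s n).arg * Complex.I), fun n => ?_, ?_⟩
    · dsimp only
      rw [← Complex.ofReal_neg, Complex.norm_exp_ofReal_mul_I]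
    · rw [norm_sq_eq, sum_mul_exp_neg_arg_mul_I, Complex.norm_real,
        Real.norm_of_nonneg (Finset.sum_nonneg fun n _ => norm_nonneg _)]
  · rintro x ⟨v, hv, rfl⟩
    rw [norm_sq_eq]
    gcongr
    exact norm_sum_mul_le_sum_norm_of_norm_eq_one s v hv

end UnitModulus

theorem Jff_eq {M N : ℕ} {A B : Type*} (c : ℂ) (u : A → EuclideanSpace ℂ (Fin M))
    (s : B → Fin N → ℂ) (θ : A) (ψ : B) :
    Jff c u s θ ψ = ‖c‖ ^ 2 * ‖u θ‖ ^ 2 * (∑ n, ‖s ψ n‖) ^ 2 :=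
  (isGreatest_norm_sq_smul_sum_mul c (u θ) (s ψ)).csSup_eq

theorem far_field_separability_general {M N : ℕ} {A B : Type*}
    (c : ℂ) (u : A → EuclideanSpace ℂ (Fin M)) (s : B → Fin N → ℂ) :
    (∀ (θ : A) (ψ : B),
      Jff c u s θ ψ
        = ‖c‖ ^ 2 * ‖u θ‖ ^ 2 * (∑ n, ‖s ψ n‖) ^ 2) ∧
    (∀ (θ θ₀ : A) (ψ ψ₀ : B),
      Jff c u s θ ψ * Jff c u s θ₀ ψ₀ = Jff c u s θ ψ₀ * Jff c u s θ₀ ψ) :=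
  ⟨Jff_eq c u s, fun θ θ₀ ψ ψ₀ => by simp only [Jff_eq]; ring⟩

/-- (i) the optimized far-field reflected-channel power factorizes as
`|c|² ‖u θ‖² (∑ n |s ψ n|)²`, and (ii) it is multiplicatively separable in `θ` and `ψ`. -/
theorem far_field_separability {M N : ℕ} {A B : Type*} [Nonempty A] [Nonempty B]
    (c : ℂ) (u : A → EuclideanSpace ℂ (Fin M)) (s : B → Fin N → ℂ) :
    (∀ (θ : A) (ψ : B),
      Jff c u s θ ψ
        = ‖c‖ ^ 2 * ‖u θ‖ ^ 2 * (∑ n, ‖s ψ n‖) ^ 2) ∧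
    (∀ (θ θ₀ : A) (ψ ψ₀ : B),
      Jff c u s θ ψ * Jff c u s θ₀ ψ₀ = Jff c u s θ ψ₀ * Jff c u s θ₀ ψ) :=
  far_field_separability_general c u s
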